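/- Let L = {(0,0),(0,1),(1,0),(3,3)} ⊆ ℤ₄² and T = L^m ⊆ ℤ₄^{2m}. Then for every character χ of ℤ₄^{2m}, χ(T)² is a real number. -/

import Mathlib

/-!
`χ(T)` factors over the coordinates as `∏ⱼ ψⱼ(L)` for characters `ψⱼ` of `ℤ₄²`, so it suffices
that each `ψ(L)²` is real. Now `ψ(L)² = ∑ ψ(x)` over the multiset `L + L`, which is stable under
negation; since `ψ(-x) = conj ψ(x)`, this sum is its own conjugate.
-/

/-- `L = {(0,0),(0,1),(1,0),(3,3)} ⊆ ℤ₄²`. -/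
def Lset : Finset (ZMod 4 × ZMod 4) := {(0, 0), (0, 1), (1, 0), (3, 3)}

/-- `T = L^m ⊆ (ℤ₄²)^m ≅ ℤ₄^{2m}`. -/
def Lpow (m : ℕ) : Finset (Fin m → ZMod 4 × ZMod 4) :=
  Finset.univ.filter fun t => ∀ j, t j ∈ Lset

open Finset

namespace AddChar

variable {G M : Type*}

lemma map_sum_eq_prod [AddCommMonoid G] [CommMonoid M] {ι : Type*} (ψ : AddChar G M)
    (s : Finset ι) (f : ι → G) : ψ (∑ i ∈ s, f i) = ∏ i ∈ s, ψ (f i) := by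
  induction s using Finset.cons_induction with
  | empty => simp
  | cons a s _ ih => rw [sum_cons, prod_cons, map_add_eq_mul, ih]

lemma sum_piFinset_eq_prod {ι : Type*} [Fintype ι] [DecidableEq ι] {A : ι → Type*}
    [∀ i, AddCommMonoid (A i)] [∀ i, DecidableEq (A i)] [CommSemiring M]
    (ψ : AddChar (∀ i, A i) M) (s : ∀ i, Finset (A i)) :
    ∑ t ∈ Fintype.piFinset s, ψ t = ∏ i, ∑ a ∈ s i, ψ (Pi.single i a) := by
  rw [prod_univ_sum]
  refine sum_congr rfl fun t _ => ?_
  rw [← map_sum_eq_prod, univ_sum_single]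

end AddChar

section Sumset

variable {G : Type*}

def sumsetMultiset [Add G] (s : Finset G) : Multiset G :=
  (s ×ˢ s).val.map fun p => p.1 + p.2

lemma AddChar.sq_sum_eq_sum_sumsetMultiset [AddCommMonoid G] {M : Type*} [CommSemiring M]
    (ψ : AddChar G M) (s : Finset G) :
    (∑ a ∈ s, ψ a) ^ 2 = ((sumsetMultiset s).map ψ).sum := by
  rw [sq, sum_mul_sum, ← sum_product', sumsetMultiset, Multiset.map_map]
  exact sum_congr rfl fun p _ => (map_add_eq_mul ψ p.1 p.2).symm

lemma AddChar.conj_sq_sum_eq_of_map_neg_sumsetMultiset [AddCommGroup G] [Finite G] {K : Type*}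
    [RCLike K] (ψ : AddChar G K) {s : Finset G}
    (hs : (sumsetMultiset s).map Neg.neg = sumsetMultiset s) :
    starRingEnd K ((∑ a ∈ s, ψ a) ^ 2) = (∑ a ∈ s, ψ a) ^ 2 := by
  rw [sq_sum_eq_sum_sumsetMultiset, ← Multiset.sum_hom _ (starRingEnd K), Multiset.map_map]
  conv_rhs => rw [← hs, Multiset.map_map]
  simp only [Function.comp_def, map_neg_eq_conj]

end Sumset

-- `L + L` is `0, (2,0), (0,2), (2,2)` once each and `±(1,0), ±(0,1), ±(1,1)` twice each.
lemma sumsetMultiset_Lset_map_neg : (sumsetMultiset Lset).map Neg.neg = sumsetMultiset Lset := by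
  decide

lemma Lpow_eq_piFinset (m : ℕ) : Lpow m = Fintype.piFinset fun _ => Lset := by
  ext; simp [Lpow]

/-- for `T = L^m` and every character `χ` of `ℤ₄^{2m} ≅ (ℤ₄²)^m`,
`χ(T)²` is a real number. -/
theorem stmt18 (m : ℕ) (χ : AddChar (Fin m → ZMod 4 × ZMod 4) ℂ) :
    ∃ r : ℝ, (∑ t ∈ Lpow m, χ t) ^ 2 = (r : ℂ) := by
  rw [← Complex.conj_eq_iff_real, Lpow_eq_piFinset, χ.sum_piFinset_eq_prod, ← prod_pow, map_prod]
  refine prod_congr rfl fun j _ => ?_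
  exact (χ.compAddMonoidHom (AddMonoidHom.single _ j)).conj_sq_sum_eq_of_map_neg_sumsetMultiset
    sumsetMultiset_Lset_map_neg
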